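/- Let r be a fixed integer and p a prime with p > B(r). Then the number of pairs (a, b) ∈ 𝔽_p × 𝔽_p with 4a³ + 27b² ≠ 0 such that the elliptic curve Y² = X³ + aX + b over 𝔽_p has exactly p + 1 − r rational points equals p·H_{r,p}/2 + O(p), where the implied constant is absolute. -/

import Mathlib

open scoped Classical

noncomputable section

/-- `Np p a b` is the number of `𝔽_p`-rational points of the curve `Y² = X³ + aX + b`
(affine points plus the point at infinity). -/
def Np (p : ℕ) (a b : ZMod p) : ℕ :=
  Nat.card {xy : ZMod p × ZMod p // xy.2 ^ 2 = xy.1 ^ 3 + a * xy.1 + b} + 1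

/-- The relation of `𝔽_p`-isomorphism between short Weierstrass curves `(a, b)`:
`(c, d)` is obtained from `(a, b)` by `(a, b) ↦ (m⁴a, m⁶b)` for some `m ≠ 0`. -/
def Isom (p : ℕ) (ab cd : ZMod p × ZMod p) : Prop :=
  ∃ m : ZMod p, m ≠ 0 ∧ cd.1 = m ^ 4 * ab.1 ∧ cd.2 = m ^ 6 * ab.2

/-- Pairs `(a,b)` defining an elliptic curve `Y² = X³ + aX + b` over `𝔽_p`
with exactly `p + 1 - r` rational points. -/
def Good (r : ℤ) (p : ℕ) : Set (ZMod p × ZMod p) :=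
  {ab | 4 * ab.1 ^ 3 + 27 * ab.2 ^ 2 ≠ 0 ∧ (Np p ab.1 ab.2 : ℤ) = (p : ℤ) + 1 - r}

/-- `H r p` = `H_{r,p}`: the number of `𝔽_p`-isomorphism classes of elliptic curves
over `𝔽_p` with exactly `p + 1 - r` rational points. -/
def H (r : ℤ) (p : ℕ) : ℕ :=
  Nat.card {C : Set (ZMod p × ZMod p) // ∃ ab ∈ Good r p,
    C = {cd | cd ∈ Good r p ∧ Isom p ab cd}}

/-- `B(r) = max {3, r, r²/4}`. -/
def Br (r : ℤ) : ℝ := max 3 (max (r : ℝ) ((r : ℝ) ^ 2 / 4))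

/-- `π_{1/2}(x) = ∫_2^x dt/(2√t log t)`. -/
def piHalf (x : ℝ) : ℝ := ∫ t in (2:ℝ)..x, 1 / (2 * Real.sqrt t * Real.log t)

/-- The Lang–Trotter constant `C_r`. -/
def Cconst (r : ℤ) : ℝ :=
  (2 / Real.pi) * ∏' ℓ : Nat.Primes,
    (if ((ℓ : ℕ) : ℤ) ∣ r then 1 - 1 / ((ℓ : ℕ) : ℝ) ^ 2
     else ((ℓ : ℕ) : ℝ) * (((ℓ : ℕ) : ℝ) ^ 2 - ((ℓ : ℕ) : ℝ) - 1) /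
       ((((ℓ : ℕ) : ℝ) - 1) * (((ℓ : ℕ) : ℝ) ^ 2 - 1)))

/-- `π_E^r(x)` for the curve `E(a,b) : y² = x³ + ax + b` with `a, b ∈ ℤ`:
the number of primes `p ≤ x` of good reduction with Frobenius trace `r`. -/
def piE (r : ℤ) (a b : ℤ) (x : ℝ) : ℕ :=
  Nat.card {p : ℕ // p.Prime ∧ (p : ℝ) ≤ x ∧ ¬ (p : ℤ) ∣ 6 * (4 * a ^ 3 + 27 * b ^ 2) ∧
    (Np p (a : ZMod p) (b : ZMod p) : ℤ) = (p : ℤ) + 1 - r}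

/-!
The scaling `(a, b) ↦ (m⁴a, m⁶b)`, `m ∈ 𝔽_p^×`, preserves the discriminant and the number of
points, and the isomorphism classes counted by `H_{r,p}` are its orbits in the set of good pairs.
Weighting each pair `x` by `1 / |orbit x|` counts orbits, so
`N - p H / 2 = ∑ₓ (1 - p / (2 |orbit x|))`. If `a ≠ 0 ≠ b` the stabiliser is `{±1}`, the orbit has
`(p - 1) / 2` elements and the summand is `-1 / (p - 1)`; the at most `2p` pairs with `a = 0` or
`b = 0` have stabiliser inside the 12th roots of unity, so their summands are bounded.
-/

open Finset

section Partition

variable {α R : Type*} [DecidableEq α] [DivisionSemiring R] [CharZero R]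

theorem card_image_eq_sum_inv_card {s : Finset α} {f : α → Finset α}
    (mem_self : ∀ x ∈ s, x ∈ f x) (subset : ∀ x ∈ s, f x ⊆ s)
    (eq_of_mem : ∀ x ∈ s, ∀ y ∈ f x, f y = f x) :
    (#(s.image f) : R) = ∑ x ∈ s, 1 / (#(f x) : R) := by
  rw [sum_comp (fun C : Finset α => 1 / (#C : R)) f, card_eq_sum_ones, Nat.cast_sum]
  refine sum_congr rfl fun C hC => ?_
  obtain ⟨x, hx, rfl⟩ := mem_image.mp hC
  have hfiber : {y ∈ s | f y = f x} = f x := by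
    ext y
    rw [mem_filter]
    exact ⟨fun ⟨hy, hxy⟩ => hxy ▸ mem_self y hy,
      fun hy => ⟨subset x hx hy, eq_of_mem x hx y hy⟩⟩
  have hpos : (#(f x) : R) ≠ 0 := Nat.cast_ne_zero.mpr (card_ne_zero_of_mem (mem_self x hx))
  rw [hfiber, nsmul_eq_mul, Nat.cast_one, mul_one_div_cancel hpos]

end Partition

section ScalingOrbit

variable {K : Type*} [Field K] [Fintype K] [DecidableEq K]

def scalingOrbit (ab : K × K) : Finset (K × K) :=
  (univ.erase 0).image fun m => (m ^ 4 * ab.1, m ^ 6 * ab.2)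

theorem mem_scalingOrbit {ab cd : K × K} :
    cd ∈ scalingOrbit ab ↔ ∃ m : K, m ≠ 0 ∧ cd.1 = m ^ 4 * ab.1 ∧ cd.2 = m ^ 6 * ab.2 := by
  simp only [scalingOrbit, mem_image, mem_erase, mem_univ, and_true, Prod.ext_iff, eq_comm]

theorem mem_scalingOrbit_self (ab : K × K) : ab ∈ scalingOrbit ab :=
  mem_scalingOrbit.mpr ⟨1, one_ne_zero, by simp, by simp⟩

theorem scalingOrbit_eq_of_mem {ab cd : K × K} (h : cd ∈ scalingOrbit ab) :
    scalingOrbit cd = scalingOrbit ab := by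
  obtain ⟨m, hm, h1, h2⟩ := mem_scalingOrbit.mp h
  ext ef
  simp only [mem_scalingOrbit, h1, h2]
  constructor
  · rintro ⟨n, hn, h3, h4⟩
    exact ⟨n * m, mul_ne_zero hn hm, by rw [h3]; ring, by rw [h4]; ring⟩
  · rintro ⟨n, hn, h3, h4⟩
    refine ⟨n / m, div_ne_zero hn hm, ?_, ?_⟩
    · rw [h3]; field_simp
    · rw [h4]; field_simp

theorem card_univ_erase_zero : #((univ : Finset K).erase (0 : K)) = Fintype.card K - 1 := by
  rw [card_erase_of_mem (mem_univ _), card_univ]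

theorem card_sub_one_le_twelve_mul_card_scalingOrbit {ab : K × K} (hab : ab ≠ 0) :
    Fintype.card K - 1 ≤ 12 * #(scalingOrbit ab) := by
  rw [← card_univ_erase_zero]
  refine card_le_mul_card_image _ 12 fun cd hcd => ?_
  obtain ⟨m₀, -, rfl⟩ := mem_image.mp hcd
  have hsub :
      {m ∈ univ.erase (0 : K) | (m ^ 4 * ab.1, m ^ 6 * ab.2) = (m₀ ^ 4 * ab.1, m₀ ^ 6 * ab.2)}
      ⊆ Polynomial.nthRootsFinset 12 (m₀ ^ 12) := by
    intro m hm
    simp only [mem_filter, Prod.mk.injEq] at hm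
    rw [Polynomial.mem_nthRootsFinset (by norm_num)]
    by_cases ha : ab.1 = 0
    · have hb : ab.2 ≠ 0 := fun hb => hab (Prod.ext ha hb)
      have h6 := mul_right_cancel₀ hb hm.2.2
      calc m ^ 12 = (m ^ 6) ^ 2 := by ring
        _ = m₀ ^ 12 := by rw [h6]; ring
    · have h4 := mul_right_cancel₀ ha hm.2.1
      calc m ^ 12 = (m ^ 4) ^ 3 := by ring
        _ = m₀ ^ 12 := by rw [h4]; ring
  calc _ ≤ #(Polynomial.nthRootsFinset 12 (m₀ ^ 12)) := card_le_card hsub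
    _ ≤ 12 := by
      rw [Polynomial.nthRootsFinset_def]
      exact (Multiset.toFinset_card_le _).trans (Polynomial.card_nthRoots _ _)

theorem two_mul_card_scalingOrbit (h2 : (2 : K) ≠ 0) {ab : K × K} (ha : ab.1 ≠ 0)
    (hb : ab.2 ≠ 0) : 2 * #(scalingOrbit ab) = Fintype.card K - 1 := by
  rw [← card_univ_erase_zero,
    card_eq_sum_card_image (fun m : K => (m ^ 4 * ab.1, m ^ 6 * ab.2)) (univ.erase 0),
    mul_comm, ← smul_eq_mul, ← sum_const]
  refine sum_congr rfl fun cd hcd => ?_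
  obtain ⟨m₀, hm₀, rfl⟩ := mem_image.mp hcd
  have hm₀ : m₀ ≠ 0 := (mem_erase.mp hm₀).1
  -- on a fibre `m ^ 2 = m₀ ^ 2`, because `m ^ 2 = m ^ 6 / m ^ 4`
  have hfiber :
      {m ∈ univ.erase (0 : K) | (m ^ 4 * ab.1, m ^ 6 * ab.2) = (m₀ ^ 4 * ab.1, m₀ ^ 6 * ab.2)}
      = {m₀, -m₀} := by
    ext m
    simp only [mem_filter, mem_erase, mem_univ, and_true, Prod.mk.injEq, mem_insert,
      mem_singleton, ← sq_eq_sq_iff_eq_or_eq_neg]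
    constructor
    · rintro ⟨-, h4, h6⟩
      have h4 := mul_right_cancel₀ ha h4
      have h6 := mul_right_cancel₀ hb h6
      apply mul_left_cancel₀ (pow_ne_zero 4 hm₀)
      linear_combination h6 - m ^ 2 * h4
    · intro h
      refine ⟨fun hm => hm₀ (pow_eq_zero_iff two_ne_zero |>.mp (by rw [← h, hm]; ring)), ?_, ?_⟩
      · rw [show m ^ 4 = (m ^ 2) ^ 2 by ring, h]; ring
      · rw [show m ^ 6 = (m ^ 2) ^ 3 by ring, h]; ring
  rw [hfiber, card_pair]
  intro h
  exact hm₀ ((mul_eq_zero.mp (by linear_combination h : 2 * m₀ = 0)).resolve_left h2)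

theorem abs_one_sub_div_card_scalingOrbit_le (h2 : (2 : K) ≠ 0) {ab : K × K} (hab : ab ≠ 0) :
    |1 - (Fintype.card K : ℝ) / (2 * #(scalingOrbit ab))| ≤
      1 / (Fintype.card K - 1 : ℝ) + if ab.1 = 0 ∨ ab.2 = 0 then 11 else 0 := by
  have hq : (2 : ℝ) ≤ Fintype.card K := by exact_mod_cast Fintype.one_lt_card
  have ho : (0 : ℝ) < #(scalingOrbit ab) := by
    exact_mod_cast card_pos.mpr ⟨ab, mem_scalingOrbit_self ab⟩
  have hq1 : (0 : ℝ) < Fintype.card K - 1 := by linarith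
  split_ifs with hcross
  · have hlow : (Fintype.card K - 1 : ℝ) ≤ 12 * #(scalingOrbit ab) := by
      have := card_sub_one_le_twelve_mul_card_scalingOrbit hab
      rw [← Nat.cast_le (α := ℝ), Nat.cast_sub Fintype.card_pos] at this
      exact_mod_cast this
    have hratio : (Fintype.card K : ℝ) / (2 * #(scalingOrbit ab)) ≤ 12 := by
      rw [div_le_iff₀ (by positivity)]; linarith
    have : 0 ≤ (Fintype.card K : ℝ) / (2 * #(scalingOrbit ab)) := by positivity
    have : 0 ≤ 1 / (Fintype.card K - 1 : ℝ) := by positivity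
    rw [abs_le]; constructor <;> linarith
  · rw [not_or] at hcross
    have hexact : (2 * #(scalingOrbit ab) : ℝ) = Fintype.card K - 1 := by
      have := two_mul_card_scalingOrbit h2 hcross.1 hcross.2
      rw [← Nat.cast_inj (R := ℝ), Nat.cast_sub Fintype.card_pos] at this
      exact_mod_cast this
    rw [hexact, add_zero, show 1 - (Fintype.card K : ℝ) / (Fintype.card K - 1)
      = -(1 / (Fintype.card K - 1)) by field_simp; ring, abs_neg, abs_of_pos (by positivity)]

theorem card_filter_fst_eq_zero_or_snd_eq_zero_le :
    #{x : K × K | x.1 = 0 ∨ x.2 = 0} ≤ 2 * Fintype.card K := by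
  rw [filter_or, two_mul]
  refine (card_union_le _ _).trans (add_le_add ?_ ?_)
  · refine card_le_card_of_injOn Prod.snd (fun _ _ => mem_univ _) fun x hx y hy hxy => ?_
    simp only [coe_filter, mem_univ, true_and] at hx hy
    exact Prod.ext (hx.trans hy.symm) hxy
  · refine card_le_card_of_injOn Prod.fst (fun _ _ => mem_univ _) fun x hx y hy hxy => ?_
    simp only [coe_filter, mem_univ, true_and] at hx hy
    exact Prod.ext hxy (hx.trans hy.symm)

theorem abs_card_sub_card_mul_card_image_scalingOrbit_le (h2 : (2 : K) ≠ 0)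
    {s : Finset (K × K)} (h0 : (0 : K × K) ∉ s) (hs : ∀ x ∈ s, scalingOrbit x ⊆ s) :
    |(#s : ℝ) - Fintype.card K * #(s.image scalingOrbit) / 2| ≤ 24 * Fintype.card K := by
  have hq : (2 : ℝ) ≤ Fintype.card K := by exact_mod_cast Fintype.one_lt_card
  have hcross : (#{x : K × K | x.1 = 0 ∨ x.2 = 0} : ℝ) ≤ 2 * Fintype.card K := by
    exact_mod_cast card_filter_fst_eq_zero_or_snd_eq_zero_le
  set q : ℝ := (Fintype.card K : ℝ)
  have hweights : (#s : ℝ) - q * #(s.image scalingOrbit) / 2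
      = ∑ x ∈ s, (1 - q / (2 * #(scalingOrbit x))) := by
    rw [card_image_eq_sum_inv_card (R := ℝ) (fun x _ => mem_scalingOrbit_self x) hs
      (fun _ _ _ hy => scalingOrbit_eq_of_mem hy), mul_sum, sum_div, sum_sub_distrib,
      card_eq_sum_ones, Nat.cast_sum, Nat.cast_one]
    congr 1
    exact sum_congr rfl fun x _ => by field_simp
  have hgeneric : q ^ 2 * (1 / (q - 1)) ≤ 2 * q := by
    rw [mul_one_div, div_le_iff₀ (by linarith)]; nlinarith
  rw [hweights]
  calc |∑ x ∈ s, (1 - q / (2 * #(scalingOrbit x)))|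
      ≤ ∑ x ∈ s, |1 - q / (2 * #(scalingOrbit x))| := abs_sum_le_sum_abs _ _
    _ ≤ ∑ x ∈ s, (1 / (q - 1) + if x.1 = 0 ∨ x.2 = 0 then 11 else 0) :=
        sum_le_sum fun x hx =>
          abs_one_sub_div_card_scalingOrbit_le h2 (ne_of_mem_of_not_mem hx h0)
    _ ≤ ∑ x : K × K, (1 / (q - 1) + if x.1 = 0 ∨ x.2 = 0 then 11 else 0) :=
        sum_le_sum_of_subset_of_nonneg (subset_univ s) fun _ _ _ => by
          have : 0 ≤ 1 / (q - 1) := by rw [one_div_nonneg]; linarith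
          split_ifs <;> linarith
    _ = q ^ 2 * (1 / (q - 1)) + #{x : K × K | x.1 = 0 ∨ x.2 = 0} * 11 := by
        rw [sum_add_distrib, ← sum_filter, sum_const, sum_const, card_univ, Fintype.card_prod,
          nsmul_eq_mul, nsmul_eq_mul]
        push_cast; ring
    _ ≤ 24 * q := by linarith

end ScalingOrbit

section Curves

variable {p : ℕ} [Fact p.Prime] {r : ℤ}

theorem Np_scale {a b m : ZMod p} (hm : m ≠ 0) : Np p (m ^ 4 * a) (m ^ 6 * b) = Np p a b := by
  unfold Np
  congr 1
  refine Nat.card_congr (Equiv.subtypeEquiv (Equiv.prodCongr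
    (Equiv.mulLeft₀ (m ^ 2) (pow_ne_zero _ hm))
    (Equiv.mulLeft₀ (m ^ 3) (pow_ne_zero _ hm))) ?_).symm
  rintro ⟨x, y⟩
  simp only [Equiv.prodCongr_apply, Equiv.mulLeft₀_apply, Prod.map]
  constructor
  · intro h; linear_combination (m ^ 6) * h
  · intro h
    apply mul_left_cancel₀ (pow_ne_zero 6 hm)
    linear_combination h

theorem mem_good_of_mem_scalingOrbit {ab cd : ZMod p × ZMod p} (hab : ab ∈ Good r p)
    (h : cd ∈ scalingOrbit ab) : cd ∈ Good r p := by
  obtain ⟨m, hm, h1, h2⟩ := mem_scalingOrbit.mp h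
  obtain ⟨hdisc, hcount⟩ := hab
  refine ⟨fun h0 => hdisc ?_, by rw [h1, h2, Np_scale hm]; exact hcount⟩
  apply mul_left_cancel₀ (pow_ne_zero 12 hm)
  rw [h1, h2] at h0
  linear_combination h0

theorem setOf_good_and_isom_eq {ab : ZMod p × ZMod p} (hab : ab ∈ Good r p) :
    {cd | cd ∈ Good r p ∧ Isom p ab cd} = scalingOrbit ab := by
  ext cd
  rw [Set.mem_ofPred_eq, mem_coe, Isom, ← mem_scalingOrbit]
  exact ⟨And.right, fun h => ⟨mem_good_of_mem_scalingOrbit hab h, h⟩⟩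

theorem H_eq_card_image_scalingOrbit :
    H r p = #((Good r p).toFinset.image scalingOrbit) := by
  have hclasses : {C | ∃ ab ∈ Good r p, C = {cd | cd ∈ Good r p ∧ Isom p ab cd}}
      = ((↑) : Finset (ZMod p × ZMod p) → Set (ZMod p × ZMod p)) ''
          ↑((Good r p).toFinset.image scalingOrbit) := by
    ext C
    simp only [Set.mem_ofPred_eq, coe_image, Set.mem_image, Set.coe_toFinset,
      exists_exists_and_eq_and]
    exact exists_congr fun ab => and_congr_right fun (hab : ab ∈ Good r p) => by
      rw [setOf_good_and_isom_eq hab, eq_comm]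
  change Nat.card ↥{C | ∃ ab ∈ Good r p, C = {cd | cd ∈ Good r p ∧ Isom p ab cd}} = _
  rw [hclasses, Nat.card_image_of_injective coe_injective, Nat.card_coe_set_eq,
    Set.ncard_coe_finset]

end Curves

/-- **(7) in Baier / David–Pappalardi.** For a fixed integer `r` and a prime `p > B(r)`,
the number of pairs `(a, b) ∈ 𝔽_p × 𝔽_p` with `4a³ + 27b² ≠ 0` such that the elliptic
curve `Y² = X³ + aX + b` has exactly `p + 1 - r` points equals `p H_{r,p}/2 + O(p)` with
an absolute implied constant. -/
theorem count_curves_with_trace :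
    ∃ K : ℝ, 0 < K ∧ ∀ r : ℤ, ∀ p : ℕ, p.Prime → Br r < p →
      |(Nat.card {ab : ZMod p × ZMod p // 4 * ab.1 ^ 3 + 27 * ab.2 ^ 2 ≠ 0 ∧
          (Np p ab.1 ab.2 : ℤ) = (p : ℤ) + 1 - r} : ℝ) -
        (p : ℝ) * (H r p) / 2| ≤ K * p := by
  refine ⟨24, by norm_num, fun r p hp hBr => ?_⟩
  have : Fact p.Prime := ⟨hp⟩
  have hp3 : 3 < p := by exact_mod_cast (le_max_left _ _).trans_lt hBr
  have h2 : (2 : ZMod p) ≠ 0 := by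
    intro h
    have := (ZMod.natCast_eq_zero_iff 2 p).mp (by exact_mod_cast h)
    exact absurd (Nat.le_of_dvd two_pos this) (by omega)
  have h0 : (0 : ZMod p × ZMod p) ∉ (Good r p).toFinset := by
    rw [Set.mem_toFinset]; exact fun h => h.1 (by simp)
  have hN : Nat.card {ab : ZMod p × ZMod p // 4 * ab.1 ^ 3 + 27 * ab.2 ^ 2 ≠ 0 ∧
      (Np p ab.1 ab.2 : ℤ) = (p : ℤ) + 1 - r} = #(Good r p).toFinset :=
    Nat.card_eq_card_toFinset (Good r p)
  have hinvariant : ∀ x ∈ (Good r p).toFinset, scalingOrbit x ⊆ (Good r p).toFinset :=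
    fun x hx y hy => Set.mem_toFinset.mpr
      (mem_good_of_mem_scalingOrbit (Set.mem_toFinset.mp hx) hy)
  rw [hN, H_eq_card_image_scalingOrbit]
  simpa only [ZMod.card] using
    abs_card_sub_card_mul_card_image_scalingOrbit_le h2 h0 hinvariant
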